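/- Let F_{n+1} be the free group on x₁, …, x_{n+1} and let φ ∈ Aut(F_{n+1}) be an automorphism such that φ restricts to an automorphism g₂ of the subgroup ⟨x₁, …, xₙ⟩ and φ(x_{n+1}) = g₁ x_{n+1} g₁⁻¹ for some g₁ ∈ ⟨x₁, …, xₙ⟩. Then the mapping torus G = F_{n+1} ⋊_φ ℤ is isomorphic to an amalgamated free product H *_ℤ ℤ², where H = Fₙ ⋊_ψ ℤ is the mapping torus of the automorphism ψ = g₁⁻¹ ∘ g₂ ∘ g₁ (conjugation composed with g₂) of Fₙ = ⟨x₁, …, xₙ⟩, and the amalgamating ℤ is generated by the stable letter of H in one factor and by one ℤ-factor of ℤ² in the other. -/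

import Mathlib

namespace Stmt12

/-- A two-member family of groups indexed by `Bool`. -/
def Fam (L₁ L₂ : Type u) : Bool → Type u := fun b => cond b L₁ L₂

instance (L₁ L₂ : Type u) [Group L₁] [Group L₂] : ∀ b, Group (Fam L₁ L₂ b)
  | true => ‹Group L₁›
  | false => ‹Group L₂›

/-- The inclusion `Fₙ → F_{n+1}` on the first `n` generators. -/
def ι (n : ℕ) : FreeGroup (Fin n) →* FreeGroup (Fin (n + 1)) :=
  FreeGroup.lift fun i => FreeGroup.of i.castSucc

open SemidirectProduct Multiplicative

private lemma conj_pow {G H : Type*} [Group G] [Group H] (f : G →* H) (e : MulAut G) (T : H)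
    (h : ∀ x, f (e x) = T * f x * T⁻¹) (k : ℤ) (x : G) :
    f ((e ^ k) x) = T ^ k * f x * (T ^ k)⁻¹ := by
  have hinv : ∀ x, f (e⁻¹ x) = T⁻¹ * f x * T := by
    intro x
    have h2 := h (e⁻¹ x)
    rw [MulAut.apply_inv_self] at h2
    rw [h2]; group
  induction k using Int.induction_on generalizing x with
  | zero => simp
  | succ k ih =>
      have h1 : (e ^ ((k : ℤ) + 1)) x = (e ^ (k : ℤ)) (e x) := by
        rw [zpow_add_one]; rfl
      rw [h1, ih (e x), h, zpow_add_one]; group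
  | pred k ih =>
      have h1 : (e ^ (-(k : ℤ) - 1)) x = (e ^ (-(k : ℤ))) (e⁻¹ x) := by
        rw [zpow_sub_one]; rfl
      rw [h1, ih (e⁻¹ x), hinv, zpow_sub_one]; group

private lemma sdp_hom_ext {N G H : Type*} [Group N] [Group G] [Group H] {φ : G →* MulAut N}
    {f g : N ⋊[φ] G →* H} (h1 : f.comp inl = g.comp inl) (h2 : f.comp inr = g.comp inr) :
    f = g := by
  ext x
  rw [← inl_left_mul_inr_right x, map_mul, map_mul]
  rw [show f (inl x.left) = g (inl x.left) from DFunLike.congr_fun h1 x.left,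
    show f (inr x.right) = g (inr x.right) from DFunLike.congr_fun h2 x.right]

private lemma prod_hom_ext {M N H : Type*} [Monoid M] [Monoid N] [Monoid H]
    {f g : M × N →* H} (h1 : f.comp (MonoidHom.inl M N) = g.comp (MonoidHom.inl M N))
    (h2 : f.comp (MonoidHom.inr M N) = g.comp (MonoidHom.inr M N)) : f = g := by
  ext ⟨a, b⟩
  have : (a, b) = (a, 1) * (1, b) := by simp
  rw [this, map_mul, map_mul,
    show f (a, 1) = g (a, 1) from DFunLike.congr_fun h1 a,
    show f (1, b) = g (1, b) from DFunLike.congr_fun h2 b]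

/-- if `φ ∈ Aut(F_{n+1})` restricts to an automorphism `g₂` of
`⟨x₁, …, xₙ⟩` and sends `x_{n+1}` to `g₁ x_{n+1} g₁⁻¹` with `g₁ ∈ ⟨x₁, …, xₙ⟩`, then the
mapping torus `F_{n+1} ⋊_φ ℤ` is an amalgamated product `H *_ℤ ℤ²` where
`H = Fₙ ⋊_ψ ℤ`, `ψ = conj(g₁⁻¹) ∘ g₂`, the amalgamating `ℤ` being generated by the
stable letter of `H` in one factor and one `ℤ`-factor of `ℤ²` in the other. -/
theorem mapping_torus_iso_amalgam (n : ℕ)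
    (φ : MulAut (FreeGroup (Fin (n + 1)))) (g₂ ψ : MulAut (FreeGroup (Fin n)))
    (g₁ : FreeGroup (Fin n))
    (hrestrict : ∀ w : FreeGroup (Fin n), φ (ι n w) = ι n (g₂ w))
    (hlast : φ (FreeGroup.of (Fin.last n)) =
      ι n g₁ * FreeGroup.of (Fin.last n) * (ι n g₁)⁻¹)
    (hψ : ∀ w : FreeGroup (Fin n), ψ w = g₁⁻¹ * g₂ w * g₁) :
    ∃ j : ∀ b, Multiplicative ℤ →*
        Fam (FreeGroup (Fin n) ⋊[zpowersHom (MulAut (FreeGroup (Fin n))) ψ] Multiplicative ℤ)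
            (Multiplicative ℤ × Multiplicative ℤ) b,
      (∀ b, Function.Injective (j b)) ∧
      j true (Multiplicative.ofAdd 1) = SemidirectProduct.inr (Multiplicative.ofAdd 1) ∧
      j false (Multiplicative.ofAdd 1) = (Multiplicative.ofAdd 1, 1) ∧
      Nonempty ((FreeGroup (Fin (n + 1))
          ⋊[zpowersHom (MulAut (FreeGroup (Fin (n + 1)))) φ] Multiplicative ℤ) ≃*
        Monoid.PushoutI j) := by
  classical
  set H := FreeGroup (Fin n) ⋊[zpowersHom (MulAut (FreeGroup (Fin n))) ψ] Multiplicative ℤ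
    with hHdef
  letI : Group H := inferInstanceAs
    (Group (FreeGroup (Fin n) ⋊[zpowersHom (MulAut (FreeGroup (Fin n))) ψ] Multiplicative ℤ))
  set G := FreeGroup (Fin (n + 1)) ⋊[zpowersHom (MulAut (FreeGroup (Fin (n + 1)))) φ]
    Multiplicative ℤ with hGdef
  letI : Group G := inferInstanceAs (Group (FreeGroup (Fin (n + 1))
    ⋊[zpowersHom (MulAut (FreeGroup (Fin (n + 1)))) φ] Multiplicative ℤ))
  set A := Multiplicative ℤ × Multiplicative ℤ with hAdef
  set t₀ : Multiplicative ℤ := Multiplicative.ofAdd 1 with ht₀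
  let J : ∀ b, Multiplicative ℤ →* Fam H A b := fun b => match b with
    | true => SemidirectProduct.inr
    | false => MonoidHom.inl _ _
  refine ⟨J, ?_, rfl, rfl, ?_⟩
  · intro b
    cases b
    · exact fun a b h => congrArg Prod.fst h
    · exact SemidirectProduct.inr_injective
  constructor
  set P := Monoid.PushoutI J with hPdef
  letI : Group P := inferInstanceAs (Group (Monoid.PushoutI J))
  let oT : H →* P := Monoid.PushoutI.of (φ := J) true
  let oA : A →* P := Monoid.PushoutI.of (φ := J) false
  -- base relation in the pushout
  have hb : oT (inr t₀) = oA (t₀, 1) := by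
    have h1 : oT (J true t₀) = Monoid.PushoutI.base J t₀ :=
      Monoid.PushoutI.of_apply_eq_base J true t₀
    have h2 : oA (J false t₀) = Monoid.PushoutI.base J t₀ :=
      Monoid.PushoutI.of_apply_eq_base J false t₀
    exact h1.trans h2.symm
  have hcomm : oT (inr t₀) * oA (1, t₀) = oA (1, t₀) * oT (inr t₀) := by
    have hpair : ((t₀, 1) : A) * (1, t₀) = ((1, t₀) : A) * (t₀, 1) := by
      simp [Prod.ext_iff, mul_comm]
    rw [hb, ← map_mul, hpair, map_mul]
  have hι : ∀ i : Fin n, ι n (FreeGroup.of i) = FreeGroup.of i.castSucc := fun i =>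
    FreeGroup.lift_apply_of
  -- conjugation identities in H and G
  have hHconj : ∀ w : FreeGroup (Fin n),
      (inr t₀ : H) * inl w * (inr t₀)⁻¹ = inl (ψ w) := by
    intro w
    have := (SemidirectProduct.inl_aut
      (φ := zpowersHom (MulAut (FreeGroup (Fin n))) ψ) t₀ w).symm
    simpa [ht₀] using this
  have hGconj : ∀ v : FreeGroup (Fin (n + 1)),
      (inr t₀ : G) * inl v * (inr t₀)⁻¹ = inl (φ v) := by
    intro v
    have := (SemidirectProduct.inl_aut
      (φ := zpowersHom (MulAut (FreeGroup (Fin (n + 1)))) φ) t₀ v).symm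
    simpa [ht₀] using this
  -- the map G →* P
  let f₁ : FreeGroup (Fin (n + 1)) →* P :=
    FreeGroup.lift fun i =>
      Fin.lastCases (oA (1, t₀)) (fun i' => oT (inl (FreeGroup.of i'))) i
  have hf₁c : ∀ i : Fin n, f₁ (FreeGroup.of i.castSucc) = oT (inl (FreeGroup.of i)) := by
    intro i; simp [f₁]
  have hf₁l : f₁ (FreeGroup.of (Fin.last n)) = oA (1, t₀) := by
    simp [f₁]
  have hf₁ι : ∀ w : FreeGroup (Fin n), f₁ (ι n w) = oT (inl w) := by
    have : f₁.comp (ι n) = oT.comp SemidirectProduct.inl := by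
      refine FreeGroup.ext_hom _ _ fun i => ?_
      simp only [MonoidHom.comp_apply]
      rw [hι i, hf₁c i]
    exact fun w => DFunLike.congr_fun this w
  set T : P := oT (inl g₁ * inr t₀) with hTdef
  have hbase : ∀ x, f₁ (φ x) = T * f₁ x * T⁻¹ := by
    have heq : f₁.comp φ.toMonoidHom = (MulAut.conj T).toMonoidHom.comp f₁ := by
      refine FreeGroup.ext_hom _ _ fun i => ?_
      simp only [MonoidHom.comp_apply, MulEquiv.coe_toMonoidHom, MulAut.conj_apply]
      induction i using Fin.lastCases with
      | last =>
          rw [hlast, map_mul, map_mul, map_inv, hf₁ι, hf₁l, hTdef, map_mul]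
          rw [show oT (inl g₁) * oT (inr t₀) * oA (1, t₀) =
            oT (inl g₁) * oA (1, t₀) * oT (inr t₀) by rw [mul_assoc, hcomm, ← mul_assoc]]
          group
      | cast i =>
          have hHkey : (inl (g₂ (FreeGroup.of i)) : H) =
              (inl g₁ * inr t₀) * inl (FreeGroup.of i) * (inl g₁ * inr t₀)⁻¹ := by
            rw [mul_inv_rev,
              show (inl g₁ * inr t₀ : H) * inl (FreeGroup.of i) *
                ((inr t₀)⁻¹ * (inl g₁)⁻¹) =
                inl g₁ * (inr t₀ * inl (FreeGroup.of i) * (inr t₀)⁻¹) * (inl g₁)⁻¹ by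
                group,
              hHconj, ← map_inv, ← map_mul, ← map_mul, hψ]
            congr 1
            group
          rw [← hι i, hrestrict, hf₁ι, hι i, hf₁c i, hHkey, hTdef]
          simp only [map_mul, map_inv]
    intro x
    have := DFunLike.congr_fun heq x
    simpa using this
  have hcond : ∀ g : Multiplicative ℤ,
      f₁.comp ((zpowersHom (MulAut (FreeGroup (Fin (n + 1)))) φ) g).toMonoidHom =
        (MulAut.conj ((zpowersHom P T) g)).toMonoidHom.comp f₁ := by
    intro g
    refine MonoidHom.ext fun x => ?_
    simp only [MonoidHom.comp_apply, MulEquiv.coe_toMonoidHom, MulAut.conj_apply,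
      zpowersHom_apply]
    exact conj_pow f₁ φ T hbase g.toAdd x
  let Fm : G →* P := SemidirectProduct.lift f₁ (zpowersHom P T) hcond
  -- the map P →* G
  let k₁N : FreeGroup (Fin n) →* G := SemidirectProduct.inl.comp (ι n)
  set S : G := (inl (ι n g₁))⁻¹ * inr t₀ with hSdef
  set Y : G := inl (FreeGroup.of (Fin.last n)) with hYdef
  have hS : ∀ w, k₁N (ψ w) = S * k₁N w * S⁻¹ := by
    intro w
    simp only [k₁N, MonoidHom.comp_apply, hSdef]
    calc (inl (ι n (ψ w)) : G)
        = (inl (ι n g₁))⁻¹ * inl (φ (ι n w)) * inl (ι n g₁) := by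
          rw [hrestrict, hψ]
          simp only [map_mul, map_inv]
    _ = (inl (ι n g₁))⁻¹ * (inr t₀ * inl (ι n w) * (inr t₀)⁻¹) * inl (ι n g₁) := by
          rw [hGconj]
    _ = (inl (ι n g₁))⁻¹ * inr t₀ * inl (ι n w) * ((inl (ι n g₁))⁻¹ * inr t₀)⁻¹ := by
          group
  have hk₁cond : ∀ g : Multiplicative ℤ,
      k₁N.comp ((zpowersHom (MulAut (FreeGroup (Fin n))) ψ) g).toMonoidHom =
        (MulAut.conj ((zpowersHom G S) g)).toMonoidHom.comp k₁N := by
    intro g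
    refine MonoidHom.ext fun x => ?_
    simp only [MonoidHom.comp_apply, MulEquiv.coe_toMonoidHom, MulAut.conj_apply,
      zpowersHom_apply]
    exact conj_pow k₁N ψ S (fun w => hS w) g.toAdd x
  let k₁ : H →* G := SemidirectProduct.lift k₁N (zpowersHom G S) hk₁cond
  have hSY : Commute S Y := by
    have h1 : S * Y * S⁻¹ = Y := by
      calc S * Y * S⁻¹
          = (inl (ι n g₁))⁻¹ * (inr t₀ * inl (FreeGroup.of (Fin.last n)) * (inr t₀)⁻¹) *
            inl (ι n g₁) := by rw [hSdef, hYdef]; group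
      _ = (inl (ι n g₁))⁻¹ * inl (φ (FreeGroup.of (Fin.last n))) * inl (ι n g₁) := by
            rw [hGconj]
      _ = Y := by
            rw [hlast, hYdef, map_mul, map_mul, map_inv]
            group
    show S * Y = Y * S
    calc S * Y = (S * Y * S⁻¹) * S := by group
    _ = Y * S := by rw [h1]
  let k₂ : A →* G := MonoidHom.noncommCoprod (zpowersHom G S) (zpowersHom G Y)
    (fun a b => by
      simp only [zpowersHom_apply]
      exact hSY.zpow_zpow a.toAdd b.toAdd)
  let Kfam : ∀ b, Fam H A b →* G := fun b => match b with
    | true => k₁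
    | false => k₂
  have hKcomm : ∀ b, (Kfam b).comp (J b) = zpowersHom G S := by
    intro b
    cases b
    · refine MonoidHom.ext_mint ?_
      show k₂ (Multiplicative.ofAdd 1, 1) = zpowersHom G S (Multiplicative.ofAdd 1)
      rw [show k₂ ((Multiplicative.ofAdd 1 : Multiplicative ℤ), 1) =
        zpowersHom G S (Multiplicative.ofAdd 1) * zpowersHom G Y 1 from
        MonoidHom.noncommCoprod_apply _ _ _ _]
      simp
    · refine MonoidHom.ext_mint ?_
      show k₁ (inr (Multiplicative.ofAdd 1)) = zpowersHom G S (Multiplicative.ofAdd 1)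
      exact SemidirectProduct.lift_inr _ _ _ _
  let K : P →* G := Monoid.PushoutI.lift Kfam (zpowersHom G S) hKcomm
  -- computations
  have hKoT : ∀ h : H, K (oT h) = k₁ h := fun h => Monoid.PushoutI.lift_of _ _ _ _
  have hKoA : ∀ a : A, K (oA a) = k₂ a := fun a => Monoid.PushoutI.lift_of _ _ _ _
  have hFinl : ∀ v, Fm (inl v) = f₁ v := fun v => SemidirectProduct.lift_inl _ _ _ _
  have hFinr : ∀ m, Fm (inr m) = (zpowersHom P T) m := fun m =>
    SemidirectProduct.lift_inr _ _ _ _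
  have hFS : Fm S = oT (inr t₀) := by
    rw [hSdef, map_mul, map_inv, hFinl, hFinr, hf₁ι]
    simp only [zpowersHom_apply, ht₀, toAdd_ofAdd, zpow_one]
    rw [hTdef, map_mul]
    group
    rfl
  have hKF : K.comp Fm = MonoidHom.id G := by
    apply sdp_hom_ext
    · refine FreeGroup.ext_hom _ _ fun i => ?_
      simp only [MonoidHom.comp_apply, MonoidHom.id_apply]
      rw [hFinl]
      induction i using Fin.lastCases with
      | last =>
          rw [hf₁l, hKoA,
            show k₂ ((1 : Multiplicative ℤ), t₀) =
              zpowersHom G S 1 * zpowersHom G Y t₀ from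
              MonoidHom.noncommCoprod_apply _ _ _ _]
          simp [ht₀, hYdef]
          rfl
      | cast i =>
          rw [hf₁c i, hKoT,
            show (k₁ (inl (FreeGroup.of i) : H) : G) = k₁N (FreeGroup.of i) from
              SemidirectProduct.lift_inl _ _ _ _]
          simp only [k₁N, MonoidHom.comp_apply]
          rw [hι i]
          rfl
    · refine MonoidHom.ext_mint ?_
      simp only [MonoidHom.comp_apply, MonoidHom.id_apply]
      rw [hFinr]
      simp only [zpowersHom_apply, toAdd_ofAdd, zpow_one]
      rw [hTdef, hKoT, map_mul]
      have e1 : k₁ (inl g₁ : H) = inl (ι n g₁) := by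
        rw [show (k₁ (inl g₁ : H) : G) = k₁N g₁ from SemidirectProduct.lift_inl _ _ _ _]
        rfl
      have e2 : k₁ (inr t₀ : H) = S := by
        rw [show (k₁ (inr t₀ : H) : G) = zpowersHom G S t₀ from
          SemidirectProduct.lift_inr _ _ _ _]
        simp [ht₀]
      rw [e1, e2, hSdef, ht₀]
      group
      rfl
  have hFK : Fm.comp K = MonoidHom.id P := by
    apply Monoid.PushoutI.hom_ext_nonempty
    intro b
    cases b
    · -- b = false
      apply prod_hom_ext
      · refine MonoidHom.ext_mint ?_
        show Fm (K (oA (Multiplicative.ofAdd 1, 1))) = oA (Multiplicative.ofAdd 1, 1)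
        rw [hKoA]
        have : k₂ ((Multiplicative.ofAdd 1 : Multiplicative ℤ), 1) = S := by
          rw [show k₂ ((Multiplicative.ofAdd 1 : Multiplicative ℤ), 1) =
            zpowersHom G S (Multiplicative.ofAdd 1) * zpowersHom G Y 1 from
            MonoidHom.noncommCoprod_apply _ _ _ _]
          simp
        rw [this, hFS, hb, ht₀]
      · refine MonoidHom.ext_mint ?_
        show Fm (K (oA (1, Multiplicative.ofAdd 1))) = oA (1, Multiplicative.ofAdd 1)
        rw [hKoA]
        have : k₂ ((1 : Multiplicative ℤ), Multiplicative.ofAdd 1) = Y := by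
          rw [show k₂ ((1 : Multiplicative ℤ), Multiplicative.ofAdd 1) =
            zpowersHom G S 1 * zpowersHom G Y (Multiplicative.ofAdd 1) from
            MonoidHom.noncommCoprod_apply _ _ _ _]
          simp
        rw [this, hYdef, hFinl, hf₁l, ht₀]
    · -- b = true
      apply sdp_hom_ext
      · refine FreeGroup.ext_hom _ _ fun i => ?_
        show Fm (K (oT (inl (FreeGroup.of i)))) = oT (inl (FreeGroup.of i))
        rw [hKoT,
          show (k₁ (inl (FreeGroup.of i) : H) : G) = k₁N (FreeGroup.of i) from
            SemidirectProduct.lift_inl _ _ _ _]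
        simp only [k₁N, MonoidHom.comp_apply]
        rw [hι i, hFinl, hf₁c i]
      · refine MonoidHom.ext_mint ?_
        show Fm (K (oT (inr (Multiplicative.ofAdd 1)))) = oT (inr (Multiplicative.ofAdd 1))
        rw [hKoT,
          show (k₁ (inr (Multiplicative.ofAdd 1) : H) : G) =
            zpowersHom G S (Multiplicative.ofAdd 1) from
            SemidirectProduct.lift_inr _ _ _ _]
        simp only [zpowersHom_apply, toAdd_ofAdd, zpow_one]
        rw [hFS, ht₀]
  exact MonoidHom.toMulEquiv Fm K hKF hFK

end Stmt12
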